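/- Let (s, l, α♯, n) be a null foliation adapted frame for a null foliation ℱ of a spacetime (M,g). Then ds♭(l,s) = g(∇_s l, s) and dα(l, α♯) = g(∇_{α♯} l, α♯); consequently dα(l, α♯) = ds♭(l, s) holds if and only if ℱ admits an equipartition of null mean curvature with respect to l, i.e., θ = g(∇_s l, s), where θ = ½[g(∇_s l, s) + g(∇_{α♯} l, α♯)] is the null expansion scalar. -/

import Mathlib

noncomputable section

namespace FFE

/-- Points of the chart domain `U_p ⊆ M` of a spacetime, in coordinates
`(x¹,…,x⁴)` (indexed here by `0,…,3`, so `x³ ↦ 2` and `x⁴ ↦ 3`). -/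
abbrev Pt : Type := Fin 4 → ℝ

/-- Scalar fields. -/
abbrev Sc : Type := Pt → ℝ

/-- Vector fields, given by their chart components. -/
abbrev Vec : Type := Fin 4 → Sc

/-- Covector fields (1-forms), given by their chart components. -/
abbrev Cov : Type := Fin 4 → Sc

/-- 2-forms, given by their (antisymmetric) chart components. -/
abbrev Form2 : Type := Fin 4 → Fin 4 → Sc

/-- Partial derivative along the `i`-th coordinate. -/
def pd (i : Fin 4) (f : Sc) : Sc := fun p => fderiv ℝ f p (Pi.single i 1)

/-- Smoothness of a scalar field. -/
def Smooth (f : Sc) : Prop := ContDiff ℝ (⊤ : ℕ∞) f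

/-- Directional derivative of a scalar field along a vector field. -/
def act (v : Vec) (f : Sc) : Sc := ∑ i, v i * pd i f

/-- Lie bracket of vector fields. -/
def bracket (v w : Vec) : Vec := fun μ => act v (w μ) - act w (v μ)

/-- Exterior derivative of a 1-form, evaluated on two vector fields:
`dω(v,w) = (∂_μ ω_ν − ∂_ν ω_μ) v^μ w^ν`. -/
def dOne (ω : Cov) (v w : Vec) : Sc :=
  ∑ μ, ∑ ν, (pd μ (ω ν) - pd ν (ω μ)) * v μ * w ν

/-- `log |f|`. -/
def logabs (f : Sc) : Sc := fun p => Real.log |f p|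

/-- A (smooth) Lorentzian metric of signature `(-1,1,1,1)`, given in a chart by its
covariant components `gdown`, contravariant components `ginv`, and volume factor
`vol = √(−det g)`. -/
structure Lorentzian where
  gdown : Fin 4 → Fin 4 → Sc
  ginv : Fin 4 → Fin 4 → Sc
  vol : Sc
  smooth_gdown : ∀ μ ν, Smooth (gdown μ ν)
  smooth_ginv : ∀ μ ν, Smooth (ginv μ ν)
  smooth_vol : Smooth vol
  symm_gdown : ∀ μ ν, gdown μ ν = gdown ν μ
  symm_ginv : ∀ μ ν, ginv μ ν = ginv ν μ
  inv_gdown : ∀ μ ν p, (∑ ρ, ginv μ ρ p * gdown ρ ν p) = if μ = ν then 1 else 0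
  vol_pos : ∀ p, 0 < vol p
  vol_sq : ∀ p, vol p ^ 2 = -Matrix.det (Matrix.of fun μ ν => gdown μ ν p)
  signature : ∀ p, ∃ e : Fin 4 → Fin 4 → ℝ, ∀ i j,
    (∑ μ, ∑ ν, gdown μ ν p * e i μ * e j ν) =
      if i = j then (if i = 0 then -1 else 1) else 0

namespace Lorentzian

variable (g : Lorentzian)

/-- Lowering an index: `v ↦ v♭`. -/
def flat (v : Vec) : Cov := fun μ => ∑ ν, g.gdown μ ν * v ν

/-- Raising an index: `ω ↦ ω♯`. -/
def sharp (ω : Cov) : Vec := fun μ => ∑ ν, g.ginv μ ν * ω ν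

/-- Metric pairing `g(v,w)` of vector fields. -/
def inner (v w : Vec) : Sc := ∑ μ, ∑ ν, g.gdown μ ν * v μ * w ν

/-- Christoffel symbols of the Levi-Civita connection. -/
def christoffel (μ ν ρ : Fin 4) : Sc := fun p =>
  (1 / 2) * ∑ σ, g.ginv μ σ p *
    (pd ν (g.gdown σ ρ) p + pd ρ (g.gdown σ ν) p - pd σ (g.gdown ν ρ) p)

/-- Covariant derivative `∇_v w` of the Levi-Civita connection. -/
def nabla (v w : Vec) : Vec := fun μ =>
  (∑ ν, v ν * pd ν (w μ)) + ∑ ν, ∑ ρ, g.christoffel μ ν ρ * v ν * w ρ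

/-- Divergence `∇_μ X^μ = (1/√(−g)) ∂_μ (√(−g) X^μ)`. -/
def div (v : Vec) : Sc := fun p =>
  (g.vol p)⁻¹ * ∑ μ, pd μ (fun q => g.vol q * v μ q) p

/-- Raising both indices of a 2-form. -/
def up2 (F : Form2) : Form2 := fun μ ν => ∑ ρ, ∑ σ, g.ginv μ ρ * g.ginv ν σ * F ρ σ

/-- The full contraction `F_{μν} F^{μν}`. -/
def contract2 (F : Form2) : Sc := ∑ μ, ∑ ν, F μ ν * g.up2 F μ ν

/-- The current density vector `j = *(d*F)`, in components
`j^μ = (1/√(−g)) ∂_ν (√(−g) F^{μν})`. -/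
def current (F : Form2) : Vec := fun μ => fun p =>
  (g.vol p)⁻¹ * ∑ ν, pd ν (fun q => g.vol q * g.up2 F μ ν q) p

/-- `F` is a null 2-form: `F_{μν}F^{μν} = 0`. -/
def IsNull (F : Form2) : Prop := g.contract2 F = 0

/-- The force-free condition `i_{j♯} F = 0` for the current `j` of `F`. -/
def ForceFree (F : Form2) : Prop := ∀ ν, (∑ μ, F μ ν * g.current F μ) = 0

end Lorentzian

/-- `dF = 0` for a 2-form. -/
def Closed (F : Form2) : Prop :=
  ∀ μ ν ρ, pd μ (F ν ρ) + pd ν (F ρ μ) + pd ρ (F μ ν) = 0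

/-- The Levi-Civita alternating symbol. -/
def eps (μ ν ρ σ : Fin 4) : ℝ :=
  Matrix.det (Matrix.of fun i j => if (![μ, ν, ρ, σ] i) = j then (1 : ℝ) else 0)

/-- Hodge star of a 2-form: `(*F)_{μν} = ½ √(−g) ε_{μνρσ} F^{ρσ}`. -/
def Lorentzian.hodge2 (g : Lorentzian) (F : Form2) : Form2 := fun μ ν => fun p =>
  (1 / 2) * g.vol p * ∑ ρ, ∑ σ, eps μ ν ρ σ * g.up2 F ρ σ p

/-- Exterior derivative of a 2-form (components of the 3-form `dG`). -/
def dTwo (G : Form2) : Fin 4 → Fin 4 → Fin 4 → Sc := fun μ ν ρ =>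
  pd μ (G ν ρ) + pd ν (G ρ μ) + pd ρ (G μ ν)

/-- The (scalar density representing the) wedge product of a 3-form with a 1-form. -/
def wedge31 (J : Fin 4 → Fin 4 → Fin 4 → Sc) (ω : Cov) : Sc := fun p =>
  ∑ μ, ∑ ν, ∑ ρ, ∑ σ, eps μ ν ρ σ * J μ ν ρ p * ω σ p

/-- The chart is adapted to a *null* foliation: on the leaves (the level sets of
`(x³,x⁴)`) the metric is degenerate, i.e. `g³³g⁴⁴ − (g³⁴)² = 0`. -/
def Lorentzian.NullAdapted (g : Lorentzian) : Prop :=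
  ∀ p, g.ginv 2 2 p * g.ginv 3 3 p - (g.ginv 2 3 p) ^ 2 = 0

/-- `M^r = g^{r3} g^{34} − g^{33} g^{r4}` (coordinates `x³,x⁴` are indices `2,3`). -/
def Mvec (g : Lorentzian) : Vec := fun r =>
  g.ginv r 2 * g.ginv 2 3 - g.ginv 2 2 * g.ginv r 3

/-- `N^r = g^{r3} g^{44} − g^{34} g^{r4}`. -/
def Nvec (g : Lorentzian) : Vec := fun r =>
  g.ginv r 2 * g.ginv 3 3 - g.ginv 2 3 * g.ginv r 3

/-- A null foliation adapted frame `(s, l, α♯, n)`: `l, n` null, `s, α♯` unit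
spacelike, `g(n,l) = −1`, all other frame inner products zero, spanning `TM`. -/
structure Frame (g : Lorentzian) (s l a n : Vec) : Prop where
  smooth_s : ∀ μ, Smooth (s μ)
  smooth_l : ∀ μ, Smooth (l μ)
  smooth_a : ∀ μ, Smooth (a μ)
  smooth_n : ∀ μ, Smooth (n μ)
  l_null : g.inner l l = 0
  n_null : g.inner n n = 0
  s_unit : g.inner s s = 1
  a_unit : g.inner a a = 1
  n_l : g.inner n l = -1
  n_s : g.inner n s = 0
  n_a : g.inner n a = 0
  l_s : g.inner l s = 0
  l_a : g.inner l a = 0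
  s_a : g.inner s a = 0
  spans : ∀ (p : Pt) (v : Fin 4 → ℝ), ∃ c : Fin 4 → ℝ,
    ∀ μ, v μ = c 0 * s μ p + c 1 * l μ p + c 2 * a μ p + c 3 * n μ p

/-- `l` is a pregeodesic vector field: `∇_l l` is everywhere proportional to `l`. -/
def Pregeodesic (g : Lorentzian) (l : Vec) : Prop :=
  ∃ f : Sc, g.nabla l l = fun μ => f * l μ

/-- The null expansion scalar `θ = ½[g(∇_s l, s) + g(∇_{α♯} l, α♯)]`. -/
def theta (g : Lorentzian) (l s a : Vec) : Sc :=
  (1 / 2 : Sc) * (g.inner (g.nabla s l) s + g.inner (g.nabla a l) a)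

/-- The foliation admits an equipartition of null mean curvature w.r.t. `l`:
`θ = g(∇_s l, s)`. -/
def Equipartition (g : Lorentzian) (l s a : Vec) : Prop :=
  theta g l s a = g.inner (g.nabla s l) s

/-- `l` admits a uniform equipartition of null mean curvature:
`g(∇_s l, α♯) + g(∇_{α♯} l, s) = 0`. -/
def UniformEquipartition (g : Lorentzian) (l s a : Vec) : Prop :=
  g.inner (g.nabla s l) a + g.inner (g.nabla a l) s = 0

/-- `v` lies in the kernel of the 2-form `F`. -/
def InKernel (F : Form2) (v : Vec) : Prop := ∀ μ, (∑ ν, F μ ν * v ν) = 0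

/-- The kernel of `F` consists at each point exactly of the vectors tangent to the
leaves of the adapted chart (those with vanishing `x³`- and `x⁴`-components). -/
def KernelExact (F : Form2) : Prop :=
  ∀ (p : Pt) (v : Fin 4 → ℝ),
    (∀ μ, (∑ ν, F μ ν p * v ν) = 0) ↔ (v 2 = 0 ∧ v 3 = 0)

/-- The kernel of `F` is at each point exactly the span of `v` and `w`. -/
def KernelSpan (F : Form2) (v w : Vec) : Prop :=
  ∀ (p : Pt) (x : Fin 4 → ℝ),
    (∀ μ, (∑ ν, F μ ν p * x ν) = 0) ↔ ∃ c d : ℝ, ∀ μ, x μ = c * v μ p + d * w μ p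

/-- `u` is a function of `(x³,x⁴)` alone (constant along the leaves). -/
def LeafConstant (u : Sc) : Prop := pd 0 u = 0 ∧ pd 1 u = 0

/-- The 2-form `F = u dx³ ∧ dx⁴`. -/
def chartF (u : Sc) : Form2 := fun μ ν =>
  u * ((if μ = 2 ∧ ν = 3 then (1 : Sc) else 0) - if μ = 3 ∧ ν = 2 then (1 : Sc) else 0)

/-- The transition factor `κ = (α₃ l♭₄ − α₄ l♭₃)⁻¹`. -/
def kappa (g : Lorentzian) (a l : Vec) : Sc :=
  (g.flat a 2 * g.flat l 3 - g.flat a 3 * g.flat l 2)⁻¹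

/-- The 2-form `F = (u·κ) α ∧ l♭` (with `α = a♭`). -/
def frameF (g : Lorentzian) (a l : Vec) (u : Sc) : Form2 := fun μ ν =>
  u * kappa g a l * (g.flat a μ * g.flat l ν - g.flat a ν * g.flat l μ)

end FFE

/-!
Torsion-freeness of the Levi-Civita connection gives `dx♭(v, w) = g(∇_v x, w) − g(∇_w x, v)`,
and metric compatibility gives `v(g(w, w')) = g(∇_v w, w') + g(w, ∇_v w')`. For `x = s` or
`x = α♯`, which has constant length and is orthogonal to `l`, the first identity reads
`dx♭(l, x) = g(∇_l x, x) − g(∇_x x, l)`; differentiating `g(x, x) = 1` along `l` kills the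
first term, and differentiating `g(x, l) = 0` along `x` turns the second into `−g(∇_x l, x)`.
The equivalence is then `½(A + B) = A ↔ B = A`.
-/

namespace FFE

lemma Smooth.differentiable {f : Sc} (hf : Smooth f) : Differentiable ℝ f :=
  ContDiff.differentiable hf (by simp)

section PartialDerivative

variable {p : Pt} (i : Fin 4)

lemma pd_mul_apply {f h : Sc} (hf : DifferentiableAt ℝ f p) (hh : DifferentiableAt ℝ h p) :
    pd i (f * h) p = pd i f p * h p + f p * pd i h p := by
  simp only [pd, fderiv_mul hf hh, add_apply, smul_apply, smul_eq_mul]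
  ring

lemma pd_sum_apply {ι : Type*} {u : Finset ι} {F : ι → Sc}
    (hF : ∀ j ∈ u, DifferentiableAt ℝ (F j) p) :
    pd i (∑ j ∈ u, F j) p = ∑ j ∈ u, pd i (F j) p := by
  simp only [pd, fderiv_sum hF, FunLike.coe_sum, Finset.sum_apply]

end PartialDerivative

lemma act_apply (v : Vec) (f : Sc) (p : Pt) : act v f p = ∑ ν, v ν p * pd ν f p := by
  simp [act, Finset.sum_apply]

lemma act_const (v : Vec) (c : ℝ) : act v (fun _ => c) = 0 := by
  funext p
  simp [act, pd, Finset.sum_apply]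

namespace Lorentzian

variable (g : Lorentzian) {p : Pt}

lemma differentiableAt_gdown (μ ν : Fin 4) : DifferentiableAt ℝ (g.gdown μ ν) p :=
  (g.smooth_gdown μ ν).differentiable p

lemma inner_apply (v w : Vec) :
    g.inner v w p = ∑ μ, ∑ ν, g.gdown μ ν p * v μ p * w ν p := by
  simp [inner, Finset.sum_apply]

lemma flat_apply (v : Vec) (μ : Fin 4) : g.flat v μ p = ∑ ν, g.gdown μ ν p * v ν p := by
  simp [flat, Finset.sum_apply]

lemma inner_eq_sum_flat_mul (v w : Vec) : g.inner v w p = ∑ σ, g.flat v σ p * w σ p := by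
  simp only [inner_apply, flat_apply, Finset.sum_mul]
  rw [Finset.sum_comm]
  refine Finset.sum_congr rfl fun σ _ => Finset.sum_congr rfl fun μ _ => ?_
  rw [g.symm_gdown]

lemma inner_comm (v w : Vec) : g.inner v w = g.inner w v := by
  funext p
  rw [inner_apply, inner_apply, Finset.sum_comm]
  refine Finset.sum_congr rfl fun μ _ => Finset.sum_congr rfl fun ν _ => ?_
  rw [g.symm_gdown]
  ring

lemma sum_gdown_mul_ginv (τ σ : Fin 4) :
    ∑ μ, g.gdown τ μ p * g.ginv μ σ p = if τ = σ then 1 else 0 := by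
  simp_rw [g.symm_gdown τ, g.symm_ginv _ σ, mul_comm (g.gdown _ τ p), g.inv_gdown σ τ p, eq_comm]

/-- Christoffel symbols of the first kind. -/
def christoffelLow (τ ν ρ : Fin 4) : Sc := fun p =>
  (1 / 2) * (pd ν (g.gdown τ ρ) p + pd ρ (g.gdown τ ν) p - pd τ (g.gdown ν ρ) p)

lemma sum_gdown_mul_christoffel (τ ν ρ : Fin 4) :
    ∑ μ, g.gdown τ μ p * g.christoffel μ ν ρ p = g.christoffelLow τ ν ρ p := by
  calc ∑ μ, g.gdown τ μ p * g.christoffel μ ν ρ p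
      = ∑ σ, (∑ μ, g.gdown τ μ p * g.ginv μ σ p) *
          ((1 / 2) * (pd ν (g.gdown σ ρ) p + pd ρ (g.gdown σ ν) p - pd σ (g.gdown ν ρ) p)) := by
        simp only [christoffel, Finset.mul_sum, Finset.sum_mul]
        rw [Finset.sum_comm]
        refine Finset.sum_congr rfl fun σ _ => Finset.sum_congr rfl fun μ _ => ?_
        ring
    _ = g.christoffelLow τ ν ρ p := by simp [sum_gdown_mul_ginv, christoffelLow]

lemma christoffelLow_comm (τ ν ρ : Fin 4) : g.christoffelLow τ ν ρ = g.christoffelLow τ ρ ν := by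
  funext p
  simp only [christoffelLow, g.symm_gdown ν ρ]
  ring

lemma christoffelLow_add_christoffelLow (τ ν ρ : Fin 4) :
    g.christoffelLow τ ν ρ p + g.christoffelLow ρ ν τ p = pd ν (g.gdown τ ρ) p := by
  simp only [christoffelLow, g.symm_gdown ρ τ, g.symm_gdown ν τ, g.symm_gdown ρ ν]
  ring

variable {g}

lemma differentiableAt_flat {w : Vec} (hw : ∀ ρ, DifferentiableAt ℝ (w ρ) p) (σ : Fin 4) :
    DifferentiableAt ℝ (g.flat w σ) p :=
  DifferentiableAt.sum fun ρ _ => (g.differentiableAt_gdown σ ρ).mul (hw ρ)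

lemma pd_flat_apply {w : Vec} (hw : ∀ ρ, DifferentiableAt ℝ (w ρ) p) (ν σ : Fin 4) :
    pd ν (g.flat w σ) p =
      ∑ ρ, (pd ν (g.gdown σ ρ) p * w ρ p + g.gdown σ ρ p * pd ν (w ρ) p) := by
  rw [flat, pd_sum_apply ν fun ρ _ => (g.differentiableAt_gdown σ ρ).mul (hw ρ)]
  exact Finset.sum_congr rfl fun ρ _ => pd_mul_apply ν (g.differentiableAt_gdown σ ρ) (hw ρ)

lemma flat_nabla_apply {w : Vec} (hw : ∀ ρ, DifferentiableAt ℝ (w ρ) p) (v : Vec) (σ : Fin 4) :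
    g.flat (g.nabla v w) σ p =
      ∑ ν, v ν p * (pd ν (g.flat w σ) p - ∑ ρ, g.christoffelLow ρ ν σ p * w ρ p) := by
  calc g.flat (g.nabla v w) σ p
      = ∑ ν, v ν p * ∑ ρ, (g.gdown σ ρ p * pd ν (w ρ) p
          + (∑ μ, g.gdown σ μ p * g.christoffel μ ν ρ p) * w ρ p) := by
        simp only [flat_apply, nabla, Pi.add_apply, Finset.sum_apply, Pi.mul_apply, mul_add,
          Finset.sum_add_distrib, Finset.mul_sum, Finset.sum_mul]
        congr 1 <;> rw [Finset.sum_comm] <;> refine Finset.sum_congr rfl fun ν _ => ?_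
        · exact Finset.sum_congr rfl fun ρ _ => by ring
        · rw [Finset.sum_comm]
          exact Finset.sum_congr rfl fun ρ _ => Finset.sum_congr rfl fun μ _ => by ring
    _ = _ := by
        refine Finset.sum_congr rfl fun ν _ => ?_
        simp only [pd_flat_apply hw, sum_gdown_mul_christoffel,
          ← christoffelLow_add_christoffelLow g σ ν, ← Finset.sum_sub_distrib]
        congr 1
        exact Finset.sum_congr rfl fun ρ _ => by ring

lemma sum_flat_mul_christoffel (w : Vec) (ν ρ : Fin 4) :
    ∑ σ, g.flat w σ p * g.christoffel σ ν ρ p = ∑ μ, w μ p * g.christoffelLow μ ν ρ p := by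
  simp only [flat_apply, Finset.sum_mul, ← sum_gdown_mul_christoffel, Finset.mul_sum]
  rw [Finset.sum_comm]
  exact Finset.sum_congr rfl fun μ _ => Finset.sum_congr rfl fun σ _ => by
    rw [g.symm_gdown]; ring

theorem act_inner_apply {w w' : Vec} (hw : ∀ μ, DifferentiableAt ℝ (w μ) p)
    (hw' : ∀ μ, DifferentiableAt ℝ (w' μ) p) (v : Vec) :
    act v (g.inner w w') p = g.inner (g.nabla v w) w' p + g.inner w (g.nabla v w') p := by
  have hinner : g.inner w w' = ∑ σ, g.flat w σ * w' σ := funext fun q => by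
    rw [inner_eq_sum_flat_mul, Finset.sum_apply]; rfl
  have hΓ : ∑ σ, g.flat w σ p * ∑ ν, ∑ ρ, g.christoffel σ ν ρ p * v ν p * w' ρ p
      = ∑ σ, (∑ ν, v ν p * ∑ ρ, g.christoffelLow ρ ν σ p * w ρ p) * w' σ p :=
    calc _ = ∑ ν, ∑ ρ, (∑ σ, g.flat w σ p * g.christoffel σ ν ρ p) * v ν p * w' ρ p := by
          simp only [Finset.mul_sum, Finset.sum_mul]
          rw [Finset.sum_comm]
          refine Finset.sum_congr rfl fun ν _ => ?_
          rw [Finset.sum_comm]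
          exact Finset.sum_congr rfl fun ρ _ => Finset.sum_congr rfl fun σ _ => by ring
      _ = _ := by
          simp only [sum_flat_mul_christoffel, Finset.mul_sum, Finset.sum_mul]
          rw [Finset.sum_comm]
          exact Finset.sum_congr rfl fun σ _ => Finset.sum_congr rfl fun ν _ =>
            Finset.sum_congr rfl fun ρ _ => by ring
  calc act v (g.inner w w') p
      = ∑ ν, v ν p * ∑ σ, (pd ν (g.flat w σ) p * w' σ p + g.flat w σ p * pd ν (w' σ) p) := by
        rw [act_apply, hinner]
        refine Finset.sum_congr rfl fun ν _ => ?_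
        rw [pd_sum_apply ν fun σ _ => (differentiableAt_flat hw σ).mul (hw' σ)]
        simp only [pd_mul_apply ν (differentiableAt_flat hw _) (hw' _)]
    _ = ∑ σ, (∑ ν, v ν p * (pd ν (g.flat w σ) p - ∑ ρ, g.christoffelLow ρ ν σ p * w ρ p)) * w' σ p
          + ∑ σ, g.flat w σ p * ((∑ ν, v ν p * pd ν (w' σ) p)
            + ∑ ν, ∑ ρ, g.christoffel σ ν ρ p * v ν p * w' ρ p) := by
        simp only [mul_add, Finset.sum_add_distrib, hΓ]
        simp only [Fin.sum_univ_four]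
        ring
    _ = g.inner (g.nabla v w) w' p + g.inner w (g.nabla v w') p := by
        simp only [inner_eq_sum_flat_mul, flat_nabla_apply hw]
        simp [nabla, Finset.sum_apply]

theorem dOne_flat_apply {x : Vec} (hx : ∀ μ, DifferentiableAt ℝ (x μ) p) (v w : Vec) :
    dOne (g.flat x) v w p = g.inner (g.nabla v x) w p - g.inner (g.nabla w x) v p := by
  rw [inner_eq_sum_flat_mul, inner_eq_sum_flat_mul]
  simp only [flat_nabla_apply hx, Finset.sum_mul]
  rw [Finset.sum_comm, ← Finset.sum_sub_distrib]
  simp only [dOne, Finset.sum_apply, Pi.mul_apply, Pi.sub_apply]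
  refine Finset.sum_congr rfl fun μ _ => ?_
  rw [← Finset.sum_sub_distrib]
  refine Finset.sum_congr rfl fun ν _ => ?_
  simp only [g.christoffelLow_comm _ ν μ]
  ring

variable (g)

theorem dOne_flat_eq_inner_nabla {l x : Vec} (hl : ∀ μ, Differentiable ℝ (l μ))
    (hx : ∀ μ, Differentiable ℝ (x μ)) {c : ℝ} (hxx : g.inner x x = fun _ => c)
    (hlx : g.inner l x = 0) :
    dOne (g.flat x) l x = g.inner (g.nabla x l) x := by
  funext p
  have hxp : ∀ μ, DifferentiableAt ℝ (x μ) p := fun μ => hx μ p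
  have hxl : g.inner x l = fun _ => 0 := by rw [inner_comm, hlx]; rfl
  have h_lxx : g.inner (g.nabla l x) x p = 0 := by
    have := act_inner_apply (g := g) hxp hxp l
    rw [hxx, act_const, inner_comm g x (g.nabla l x)] at this
    simp only [Pi.zero_apply] at this
    linarith
  have h_xxl : g.inner (g.nabla x x) l p = -g.inner (g.nabla x l) x p := by
    have := act_inner_apply (g := g) hxp (fun μ => hl μ p) x
    rw [hxl, act_const, inner_comm g x (g.nabla x l)] at this
    simp only [Pi.zero_apply] at this
    linarith
  rw [dOne_flat_apply hxp, h_lxx, h_xxl]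
  ring

end Lorentzian

lemma one_half_mul_add_eq_left_iff {α : Type*} (f h : α → ℝ) :
    (1 / 2 : α → ℝ) * (f + h) = f ↔ h = f := by
  simp only [funext_iff, Pi.mul_apply, Pi.add_apply, Pi.div_apply, Pi.ofNat_apply]
  refine forall_congr' fun x => ?_
  constructor <;> intro hx <;> linarith

end FFE

/-- For a null foliation adapted frame `(s, l, α♯, n)`:
`ds♭(l,s) = g(∇_s l, s)` and `dα(l,α♯) = g(∇_{α♯} l, α♯)`; consequently
`dα(l,α♯) = ds♭(l,s)` holds iff `ℱ` admits an equipartition of null mean curvature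
with respect to `l`, i.e. `θ = g(∇_s l, s)` where
`θ = ½[g(∇_s l, s) + g(∇_{α♯} l, α♯)]`. -/
theorem FFE.equipartition_iff (g : Lorentzian) (s l a n : Vec)
    (hframe : Frame g s l a n) :
    dOne (g.flat s) l s = g.inner (g.nabla s l) s ∧
    dOne (g.flat a) l a = g.inner (g.nabla a l) a ∧
    (dOne (g.flat a) l a = dOne (g.flat s) l s ↔ Equipartition g l s a) := by
  have hl := fun μ => (hframe.smooth_l μ).differentiable
  have hs := g.dOne_flat_eq_inner_nabla hl (fun μ => (hframe.smooth_s μ).differentiable)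
    hframe.s_unit hframe.l_s
  have ha := g.dOne_flat_eq_inner_nabla hl (fun μ => (hframe.smooth_a μ).differentiable)
    hframe.a_unit hframe.l_a
  refine ⟨hs, ha, ?_⟩
  rw [hs, ha, Equipartition, theta, one_half_mul_add_eq_left_iff]
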